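/- Let O be a discrete valuation ring with maximal ideal m and finite residue field k = O/m, let O₂ = O/m², κ₀ : O₂ → k the quotient map, κ : GLₙ(O₂) → GLₙ(k) the induced reduction homomorphism, and K = ker κ. Fix a nontrivial character ψ : (k,+) → ℂˣ, a generator π of the ideal m·O₂ of O₂, and a section s : k → O₂ of κ₀ with s(0) = 0 and s(1) = 1 extended entrywise to 𝔰 : Mₙ(k) → Mₙ(O₂). Let A ∈ Mₙ(k) be a split matrix in Jordan canonical form: the block diagonal matrix with blocks Aᵢ = aᵢ·I + (block diagonal of principal nilpotent matrices), with a₁, …, a_l pairwise distinct in k. Then the stabilizer T(ψ_A) of the character ψ_A of K equals the product set K · Z_{GLₙ(O₂)}(𝔰(A)), i.e. every element of T(ψ_A) is a product x·y with x ∈ K and y ∈ GLₙ(O₂) commuting with 𝔰(A), and conversely every such product lies in T(ψ_A). -/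

import Mathlib

open Matrix

/-- The `s × s` principal nilpotent matrix: `1`s on the superdiagonal, `0` elsewhere. -/
def principalNilpotent (R : Type*) [Zero R] [One R] (s : ℕ) :
    Matrix (Fin s) (Fin s) R :=
  Matrix.of fun i j => if (i : ℕ) + 1 = (j : ℕ) then 1 else 0

/-- Index type for a matrix in Jordan canonical form with eigenvalue blocks of sizes
`lam i j` (block `j` of eigenvalue `i`). -/
abbrev JIdx (l : ℕ) (c : Fin l → ℕ) (lam : (i : Fin l) → Fin (c i) → ℕ) : Type :=
  (i : Fin l) × ((j : Fin (c i)) × Fin (lam i j))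

/-- The reduction map `O/m² → O/m = k`. -/
noncomputable def redRes (O : Type) [CommRing O] [IsLocalRing O] :
    O ⧸ (IsLocalRing.maximalIdeal O ^ 2) →+* IsLocalRing.ResidueField O :=
  Ideal.Quotient.factor (S := IsLocalRing.maximalIdeal O ^ 2) (T := IsLocalRing.maximalIdeal O)
    (Ideal.pow_le_self two_ne_zero)

/-- The reduction homomorphism `κ : GL_ι(O/m²) → GL_ι(k)`. -/
noncomputable def redGL (O : Type) [CommRing O] [IsLocalRing O]
    (ι : Type) [Fintype ι] [DecidableEq ι] :
    GL ι (O ⧸ (IsLocalRing.maximalIdeal O ^ 2)) →* GL ι (IsLocalRing.ResidueField O) :=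
  Matrix.GeneralLinearGroup.map (redRes O)

/-- The stabilizer `T(θ)` of a character `θ` of a normal subgroup `N` under the
conjugation action of `G`. -/
def charStabilizer {G : Type*} [Group G] (N : Subgroup G) [hN : N.Normal]
    (θ : ↥N →* ℂˣ) : Subgroup G where
  carrier := {g : G | ∀ (x : G) (hx : x ∈ N),
    θ ⟨g * x * g⁻¹, hN.conj_mem x hx g⟩ = θ ⟨x, hx⟩}
  one_mem' := by intro x hx; simp
  mul_mem' := by
    intro a b ha hb x hx
    have h2 := ha (b * x * b⁻¹) (hN.conj_mem x hx b)
    rw [hb x hx] at h2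
    rw [← h2]
    exact congrArg θ (Subtype.ext (by group))
  inv_mem' := by
    intro a ha x hx
    have h := ha (a⁻¹ * x * a⁻¹⁻¹) (hN.conj_mem x hx a⁻¹)
    rw [← h]
    exact congrArg θ (Subtype.ext (by group))

/-!
The kernel `K` consists of the matrices `1 + π Y`, and conjugation by `g` acts on `ψ_A` only
through the reduction `ḡ`, replacing `A` by `ḡ⁻¹ A ḡ`. As `ψ` is nontrivial the trace pairing
detects matrices, so `T(ψ_A)` is the preimage of the centralizer of `A` in `GLₙ(k)`. It remains to
lift a matrix `W` commuting with `A` to one commuting with `𝔰(A)`, and `𝔰(W)` works: the entries of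
`W` linking distinct eigenvalues vanish (descend along the Jordan chains), and the remaining
commutation relations merely identify entries of `W` with each other, so they survive applying `s`
entrywise.
-/

section PartialPermutation

variable {n K R : Type*} [DecidableEq n]

theorem Matrix.map_mul_toMatrix [Fintype n] [NonAssocSemiring K] [NonAssocSemiring R]
    {s : K → R} (hs : s 0 = 0) (M : Matrix n n K) (f : n ≃. n) :
    (M * f.toMatrix).map s = M.map s * f.toMatrix := by
  ext i j
  simp only [map_apply, PEquiv.mul_toMatrix_apply]
  cases f.symm j <;> simp [hs]

theorem Matrix.map_toMatrix_mul [Fintype n] [NonAssocSemiring K] [NonAssocSemiring R]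
    {s : K → R} (hs : s 0 = 0) (M : Matrix n n K) (f : n ≃. n) :
    (f.toMatrix * M).map s = f.toMatrix * M.map s := by
  ext i j
  simp only [map_apply, PEquiv.toMatrix_mul_apply]
  cases f i <;> simp [hs]

theorem Matrix.map_diagonal_add_toMatrix [NonAssocSemiring K] [NonAssocSemiring R] {s : K → R}
    (hs0 : s 0 = 0) (hs1 : s 1 = 1) (d : n → K) {f : n ≃. n} (hf : ∀ i, i ∉ f i) :
    (diagonal d + f.toMatrix).map s = diagonal (s ∘ d) + f.toMatrix := by
  ext i j
  obtain rfl | hij := eq_or_ne i j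
  · simp [hf i]
  · simp only [map_apply, add_apply, diagonal_apply_ne _ hij, PEquiv.toMatrix_apply, zero_add]
    split_ifs <;> assumption

theorem Matrix.commute_diagonal_of_apply_eq_zero [Fintype n] [CommSemiring K] {M : Matrix n n K}
    {d : n → K} (h : ∀ i j, d i ≠ d j → M i j = 0) : Commute M (diagonal d) := by
  ext i j
  rw [mul_diagonal, diagonal_mul]
  by_cases hij : d i = d j
  · rw [hij, mul_comm]
  · rw [h i j hij, zero_mul, mul_zero]

theorem Commute.map_toMatrix [Fintype n] [NonAssocSemiring K] [NonAssocSemiring R]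
    {M : Matrix n n K} {f : n ≃. n} (h : Commute M f.toMatrix) {s : K → R} (hs : s 0 = 0) :
    Commute (M.map s) f.toMatrix := by
  rw [commute_iff_eq, ← map_mul_toMatrix hs, ← map_toMatrix_mul hs, h.eq]

variable [Fintype n] [CommRing K] [NoZeroDivisors K] {d : n → K} {f : n ≃. n}

/-- Along the chains of `f` the entries satisfy `(d j - d i) * M i j = M (f i) j - M i (f⁻¹ j)`,
and `v` makes the chains finite. -/
theorem Matrix.apply_eq_zero_of_commute_diagonal_add_toMatrix
    (hd : ∀ i j, j ∈ f i → d j = d i) (v : n → ℕ) (hv : ∀ i j, j ∈ f i → v i < v j)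
    {M : Matrix n n K} (hM : Commute M (diagonal d + f.toMatrix)) {i j : n} (hij : d i ≠ d j) :
    M i j = 0 := by
  set N := Finset.univ.sup v
  induction hm : N - v i + v j using Nat.strong_induction_on generalizing i j with
  | _ m ih =>
  subst hm
  have hleft : (M * f.toMatrix : Matrix n n K) i j = 0 := by
    rw [PEquiv.mul_toMatrix_apply]
    cases hj : f.symm j with
    | none => rfl
    | some j' =>
      have hjj' : j ∈ f j' := f.mem_iff_mem.mp hj
      have := hv _ _ hjj'
      exact ih _ (by omega) (hd _ _ hjj' ▸ hij) rfl
  have hright : (f.toMatrix * M : Matrix n n K) i j = 0 := by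
    rw [PEquiv.toMatrix_mul_apply]
    cases hi : f i with
    | none => rfl
    | some i' =>
      have hii' : i' ∈ f i := hi
      have := hv _ _ hii'
      have : v i' ≤ N := Finset.le_sup (Finset.mem_univ i')
      exact ih _ (by omega) (hd _ _ hii' ▸ hij) rfl
  have hentry := congr_fun₂ hM.eq i j
  simp only [mul_add, add_mul, add_apply, mul_diagonal, diagonal_mul, hleft, hright] at hentry
  have : (d j - d i) * M i j = 0 := by linear_combination hentry
  exact (mul_eq_zero.mp this).resolve_left (sub_ne_zero.mpr hij.symm)

theorem Commute.map_diagonal_add_toMatrix [CommSemiring R]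
    (hd : ∀ i j, j ∈ f i → d j = d i) (v : n → ℕ) (hv : ∀ i j, j ∈ f i → v i < v j)
    {M : Matrix n n K} (hM : Commute M (diagonal d + f.toMatrix))
    {s : K → R} (hs0 : s 0 = 0) (hs1 : s 1 = 1) :
    Commute (M.map s) ((diagonal d + f.toMatrix).map s) := by
  have hzero : ∀ i j, d i ≠ d j → M i j = 0 := fun i j hij =>
    apply_eq_zero_of_commute_diagonal_add_toMatrix hd v hv hM hij
  have hshift : Commute M f.toMatrix := by
    simpa using hM.sub_right (commute_diagonal_of_apply_eq_zero hzero)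
  rw [Matrix.map_diagonal_add_toMatrix hs0 hs1 d fun i hi => (hv i i hi).false]
  refine Commute.add_right (commute_diagonal_of_apply_eq_zero fun i j hij => ?_)
    (hshift.map_toMatrix hs0)
  rw [map_apply, hzero i j fun h => hij (by simp [h]), hs0]

end PartialPermutation

section Jordan

variable {l : ℕ} {c : Fin l → ℕ} {lam : (i : Fin l) → Fin (c i) → ℕ}

theorem JIdx.ext_iff {r t : JIdx l c lam} :
    r = t ↔ r.1 = t.1 ∧ (r.2.1 : ℕ) = t.2.1 ∧ (r.2.2 : ℕ) = t.2.2 := by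
  refine ⟨by rintro rfl; simp, ?_⟩
  obtain ⟨i, j, p⟩ := r
  obtain ⟨i', j', p'⟩ := t
  rintro ⟨rfl, hj, hp⟩
  obtain rfl := Fin.ext hj
  obtain rfl := Fin.ext hp
  rfl

def jordanShift (l : ℕ) (c : Fin l → ℕ) (lam : (i : Fin l) → Fin (c i) → ℕ) :
    JIdx l c lam ≃. JIdx l c lam where
  toFun r := if h : (r.2.2 : ℕ) + 1 < lam r.1 r.2.1 then some ⟨r.1, r.2.1, ⟨r.2.2 + 1, h⟩⟩ else none
  invFun r := if h : 0 < (r.2.2 : ℕ) then some ⟨r.1, r.2.1, ⟨r.2.2 - 1, by omega⟩⟩ else none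
  inv := by
    rintro ⟨i, j, p⟩ ⟨i', j', p'⟩
    have := p.isLt
    have := p'.isLt
    dsimp only
    split_ifs <;>
      simp only [Option.some.injEq, JIdx.ext_iff, false_iff, iff_false, not_and]
    all_goals first
      | (constructor <;> rintro ⟨rfl, hj, hp⟩ <;> exact ⟨rfl, hj.symm, by omega⟩)
      | (rintro rfl hj; obtain rfl := Fin.ext hj; omega)

theorem mem_jordanShift_iff {r t : JIdx l c lam} :
    t ∈ jordanShift l c lam r ↔ t.1 = r.1 ∧ (t.2.1 : ℕ) = r.2.1 ∧ (t.2.2 : ℕ) = r.2.2 + 1 := by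
  obtain ⟨i, j, p⟩ := r
  obtain ⟨i', j', p'⟩ := t
  have := p'.isLt
  simp only [jordanShift, PEquiv.coe_mk]
  split_ifs
  · simp only [Option.mem_def, Option.some.injEq, JIdx.ext_iff]
    constructor <;> rintro ⟨rfl, hj, hp⟩ <;> exact ⟨rfl, hj.symm, hp.symm⟩
  · simp only [Option.mem_def, reduceCtorEq, false_iff, not_and]
    rintro rfl hj
    obtain rfl := Fin.ext hj
    omega

def jordanMatrix {K : Type*} [Semiring K] (a : Fin l → K) (c : Fin l → ℕ)
    (lam : (i : Fin l) → Fin (c i) → ℕ) : Matrix (JIdx l c lam) (JIdx l c lam) K :=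
  blockDiagonal' fun i => a i • (1 : Matrix ((j : Fin (c i)) × Fin (lam i j))
    ((j : Fin (c i)) × Fin (lam i j)) K) +
      blockDiagonal' fun j => principalNilpotent K (lam i j)

theorem jordanMatrix_eq_diagonal_add_toMatrix {K : Type*} [Semiring K] (a : Fin l → K) :
    jordanMatrix a c lam = diagonal (fun r => a r.1) + (jordanShift l c lam).toMatrix := by
  ext ⟨i, j, p⟩ ⟨i', j', p'⟩
  rw [jordanMatrix, Matrix.add_apply, PEquiv.toMatrix_apply]
  simp only [mem_jordanShift_iff, diagonal_apply]
  obtain rfl | hi := eq_or_ne i i'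
  · rw [blockDiagonal'_apply_eq, Matrix.add_apply, Matrix.smul_apply, one_apply]
    obtain rfl | hj := eq_or_ne j j'
    · simp [principalNilpotent, eq_comm]
    · have hj' : (j' : ℕ) ≠ j := fun h => hj (Fin.ext h.symm)
      simp [blockDiagonal'_apply_ne _ _ _ hj, hj, hj']
  · simp [blockDiagonal'_apply_ne _ _ _ hi, hi, Ne.symm hi]

theorem Commute.map_jordanMatrix {K R : Type*} [CommRing K] [NoZeroDivisors K] [CommSemiring R]
    {a : Fin l → K} {M : Matrix (JIdx l c lam) (JIdx l c lam) K}
    (hM : Commute M (jordanMatrix a c lam)) {s : K → R} (hs0 : s 0 = 0) (hs1 : s 1 = 1) :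
    Commute (M.map s) ((jordanMatrix a c lam).map s) := by
  rw [jordanMatrix_eq_diagonal_add_toMatrix] at hM ⊢
  refine hM.map_diagonal_add_toMatrix (fun r t h => ?_) (fun r => r.2.2) (fun r t h => ?_) hs0 hs1
  · rw [(mem_jordanShift_iff.mp h).1]
  · have := (mem_jordanShift_iff.mp h).2.2
    omega

end Jordan

theorem Matrix.eq_of_forall_addChar_trace_mul_eq {ι F M : Type*} [Fintype ι] [DecidableEq ι]
    [Field F] [CommGroup M] {ψ : AddChar F M} (hψ : ψ ≠ 1) {B C : Matrix ι ι F}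
    (h : ∀ Z, ψ (trace (B * Z)) = ψ (trace (C * Z))) : B = C := by
  rw [← sub_eq_zero]
  ext i j
  by_contra hij
  refine AddChar.IsPrimitive.of_ne_one hψ hij (DFunLike.ext _ _ fun x => ?_)
  have hx := h (single j i x)
  rw [trace_mul_single, trace_mul_single, op_smul_eq_mul, op_smul_eq_mul] at hx
  simp [sub_mul, AddChar.map_sub_eq_div, hx]

namespace Matrix.GeneralLinearGroup

variable {R k ι : Type*} [CommRing R] [CommRing k] [Fintype ι] [DecidableEq ι] (φ : R →+* k)

theorem mem_ker_map_iff {g : GL ι R} : g ∈ (map φ).ker ↔ (g : Matrix ι ι R).map φ = 1 := by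
  rw [MonoidHom.mem_ker, Units.ext_iff]
  rfl

theorem exists_coe_eq_one_add_smul {π : R} (hπ : RingHom.ker φ ≤ Ideal.span {π}) {g : GL ι R}
    (hg : g ∈ (map φ).ker) : ∃ Y : Matrix ι ι R, (g : Matrix ι ι R) = 1 + π • Y := by
  have hdvd : ∀ i j, π ∣ (g : Matrix ι ι R) i j - (1 : Matrix ι ι R) i j := fun i j => by
    rw [← Ideal.mem_span_singleton]
    refine hπ ?_
    have hij := congr_fun₂ ((mem_ker_map_iff φ).mp hg) i j
    rw [map_apply] at hij
    simp [hij, one_apply, apply_ite φ]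
  choose Y hY using hdvd
  exact ⟨of Y, by ext i j; simp [← hY]⟩

theorem isUnit_of_isUnit_map [IsLocalHom φ] {M : Matrix ι ι R} (h : IsUnit (M.map φ)) :
    IsUnit M := by
  rw [isUnit_iff_isUnit_det] at h ⊢
  exact (isUnit_map_iff φ _).mp (by rwa [RingHom.map_det])

theorem exists_mem_ker_coe_eq_one_add_smul [IsLocalHom φ] {π : R} (hπ : φ π = 0)
    (Y : Matrix ι ι R) : ∃ z : GL ι R, z ∈ (map φ).ker ∧ (z : Matrix ι ι R) = 1 + π • Y := by
  have hmap : (1 + π • Y).map φ = 1 := by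
    ext i j
    simp [hπ, one_apply, apply_ite φ]
  have hunit := isUnit_of_isUnit_map φ (hmap ▸ isUnit_one)
  exact ⟨hunit.unit, (mem_ker_map_iff φ).mpr hmap, hunit.unit_spec⟩

theorem coe_conj_eq_one_add_smul {π : R} {Y : Matrix ι ι R} {z : GL ι R}
    (hz : (z : Matrix ι ι R) = 1 + π • Y) (w : GL ι R) :
    ((w * z * w⁻¹ : GL ι R) : Matrix ι ι R) =
      1 + π • ((w : Matrix ι ι R) * Y * (w⁻¹ : GL ι R)) := by
  rw [Units.val_mul, Units.val_mul, hz, mul_add, mul_one, add_mul, Units.mul_inv, mul_smul_comm,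
    smul_mul_assoc]

end Matrix.GeneralLinearGroup

theorem Matrix.GeneralLinearGroup.mem_charStabilizer_ker_map_iff {R k ι : Type*} [CommRing R]
    [Field k] [Fintype ι] [DecidableEq ι] (φ : R →+* k) [IsLocalHom φ]
    (hφ : Function.Surjective φ) {π : R}
    (hπ : RingHom.ker φ = Ideal.span {π}) {ψ : AddChar k ℂˣ} (hψ : ψ ≠ 1) {A : Matrix ι ι k}
    {θ : (map φ : GL ι R →* GL ι k).ker →* ℂˣ}
    (hθ : ∀ (x : (map φ : GL ι R →* GL ι k).ker) (Y : Matrix ι ι R),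
      ((x : GL ι R) : Matrix ι ι R) = 1 + π • Y → θ x = ψ (trace (A * Y.map φ)))
    (w : GL ι R) :
    w ∈ charStabilizer (map φ).ker θ ↔ Commute ((w : Matrix ι ι R).map φ) A := by
  set W := map φ w
  set B : Matrix ι ι k := ((W⁻¹ : GL ι k) : Matrix ι ι k) * A * W with hB
  have hπ0 : φ π = 0 := by
    rw [← RingHom.mem_ker, hπ]
    exact Ideal.mem_span_singleton_self π
  have hconj : ∀ (z : GL ι R) (hz : z ∈ (map φ).ker) (Y : Matrix ι ι R),
      (z : Matrix ι ι R) = 1 + π • Y →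
        θ ⟨w * z * w⁻¹, (map φ).normal_ker.conj_mem z hz w⟩ = ψ (trace (B * Y.map φ)) := by
    intro z hz Y hzY
    rw [hθ _ _ (coe_conj_eq_one_add_smul hzY w), Matrix.map_mul, Matrix.map_mul]
    congr 1
    rw [← mul_assoc, ← mul_assoc, trace_mul_comm]
    simp only [hB, mul_assoc]
    rfl
  calc w ∈ charStabilizer (map φ).ker θ
      ↔ ∀ Y : Matrix ι ι R, ψ (trace (B * Y.map φ)) = ψ (trace (A * Y.map φ)) := by
        refine ⟨fun hw Y => ?_, fun h z hz => ?_⟩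
        · obtain ⟨z, hz, hzY⟩ := exists_mem_ker_coe_eq_one_add_smul φ hπ0 Y
          rw [← hconj z hz Y hzY, hw z hz, hθ _ _ hzY]
        · obtain ⟨Y, hY⟩ := exists_coe_eq_one_add_smul φ hπ.le hz
          rw [hconj z hz Y hY, h Y, hθ ⟨z, hz⟩ _ hY]
    _ ↔ ∀ Z : Matrix ι ι k, ψ (trace (B * Z)) = ψ (trace (A * Z)) := by
        refine ⟨fun h Z => ?_, fun h Y => h _⟩
        simpa [Matrix.map_map, Function.comp_def, Function.surjInv_eq hφ]
          using h (Z.map (Function.surjInv hφ))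
    _ ↔ B = A := ⟨eq_of_forall_addChar_trace_mul_eq hψ, fun h Z => by rw [h]⟩
    _ ↔ Commute ((w : Matrix ι ι R).map φ) A := by
        rw [hB, mul_assoc, Units.inv_mul_eq_iff_eq_mul, eq_comm]
        rfl

instance isLocalHom_redRes (O : Type) [CommRing O] [IsLocalRing O] : IsLocalHom (redRes O) where
  map_nonunit x hx := by
    obtain ⟨x, rfl⟩ := Ideal.Quotient.mk_surjective x
    exact ((isUnit_map_iff (IsLocalRing.residue O) x).mp hx).map _

theorem charStabilizer_eq_ker_mul_centralizer_section_general
    (O : Type) [CommRing O] [IsDomain O] [IsDiscreteValuationRing O]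
    (π : O ⧸ (IsLocalRing.maximalIdeal O ^ 2))
    (hπ : Ideal.span {π} =
      Ideal.map (Ideal.Quotient.mk (IsLocalRing.maximalIdeal O ^ 2))
        (IsLocalRing.maximalIdeal O))
    (ψ : AddChar (IsLocalRing.ResidueField O) ℂˣ) (hψ : ∃ x, ψ x ≠ 1)
    (s : IsLocalRing.ResidueField O → O ⧸ (IsLocalRing.maximalIdeal O ^ 2))
    (hs : ∀ x, redRes O (s x) = x) (hs0 : s 0 = 0) (hs1 : s 1 = 1)
    (l : ℕ) (a : Fin l → IsLocalRing.ResidueField O)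
    (c : Fin l → ℕ) (lam : (i : Fin l) → Fin (c i) → ℕ)
    (A : Matrix (JIdx l c lam) (JIdx l c lam) (IsLocalRing.ResidueField O))
    (hA : A = Matrix.blockDiagonal' (fun i =>
      a i • (1 : Matrix ((j : Fin (c i)) × Fin (lam i j)) ((j : Fin (c i)) × Fin (lam i j))
          (IsLocalRing.ResidueField O)) +
        Matrix.blockDiagonal' (fun j => principalNilpotent (IsLocalRing.ResidueField O)
          (lam i j))))
    (θ : ↥(redGL O (JIdx l c lam)).ker →* ℂˣ)
    (hθ : ∀ (x : ↥(redGL O (JIdx l c lam)).ker)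
        (Y : Matrix (JIdx l c lam) (JIdx l c lam) (O ⧸ (IsLocalRing.maximalIdeal O ^ 2))),
      ((x : GL (JIdx l c lam) (O ⧸ (IsLocalRing.maximalIdeal O ^ 2))) :
          Matrix (JIdx l c lam) (JIdx l c lam) (O ⧸ (IsLocalRing.maximalIdeal O ^ 2))) =
        1 + π • Y →
      θ x = ψ (Matrix.trace (A * Y.map (redRes O)))) :
    (charStabilizer (redGL O (JIdx l c lam)).ker θ :
        Set (GL (JIdx l c lam) (O ⧸ (IsLocalRing.maximalIdeal O ^ 2)))) =
      {w : GL (JIdx l c lam) (O ⧸ (IsLocalRing.maximalIdeal O ^ 2)) |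
        ∃ x ∈ (redGL O (JIdx l c lam)).ker,
          ∃ y : GL (JIdx l c lam) (O ⧸ (IsLocalRing.maximalIdeal O ^ 2)),
            ((↑y : Matrix (JIdx l c lam) (JIdx l c lam)
                (O ⧸ (IsLocalRing.maximalIdeal O ^ 2))) * A.map s =
              A.map s * (↑y : Matrix (JIdx l c lam) (JIdx l c lam)
                (O ⧸ (IsLocalRing.maximalIdeal O ^ 2)))) ∧
            w = x * y} := by
  have hker : RingHom.ker (redRes O) = Ideal.span {π} :=
    (Ideal.Quotient.factor_ker _).trans hπ.symm
  have hsec : ∀ M : Matrix (JIdx l c lam) (JIdx l c lam) _, (M.map s).map (redRes O) = M :=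
    fun M => by ext; simp [hs]
  subst hA
  ext w
  refine (GeneralLinearGroup.mem_charStabilizer_ker_map_iff (redRes O)
    (Ideal.Quotient.factor_surjective _) hker (AddChar.ne_one_iff.mpr hψ) hθ w).trans
      ⟨fun hw => ?_, ?_⟩
  · set W := (w : Matrix (JIdx l c lam) (JIdx l c lam) _).map (redRes O)
    have hunit : IsUnit (W.map s) := GeneralLinearGroup.isUnit_of_isUnit_map (redRes O)
      (by rw [hsec]; exact (redGL O _ w).isUnit)
    refine ⟨w * hunit.unit⁻¹, ?_, hunit.unit, hw.map_jordanMatrix hs0 hs1,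
      (inv_mul_cancel_right w _).symm⟩
    rw [MonoidHom.mem_ker, map_mul, map_inv, mul_inv_eq_one, Units.ext_iff]
    exact (hsec W).symm
  · rintro ⟨x, hx, y, hy, rfl⟩
    rw [Units.val_mul, Matrix.map_mul, (GeneralLinearGroup.mem_ker_map_iff (redRes O)).mp hx,
      one_mul, commute_iff_eq]
    simpa only [Matrix.map_mul, hsec] using congrArg (Matrix.map · (redRes O)) hy

/-- Let `O` be a discrete valuation ring with finite residue field `k`, `O₂ = O/m²`,
`κ` the reduction homomorphism `GL(O₂) → GL(k)` and `K = ker κ`.  Fix a nontrivial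
additive character `ψ` of `k`, a generator `π` of `m·O₂`, a section `s` of `O₂ → k`
with `s(0) = 0`, `s(1) = 1` (extended entrywise to `𝔰`), and let `A` be a split matrix
over `k` in Jordan canonical form (block diagonal with blocks
`aᵢ·I + (block diagonal of principal nilpotents)`, the `aᵢ` pairwise distinct).
Then the stabilizer `T(ψ_A)` of the character `ψ_A` of `K` equals the product set
`K · Z_{GL(O₂)}(𝔰(A))`. -/
theorem charStabilizer_eq_ker_mul_centralizer_section
    (O : Type) [CommRing O] [IsDomain O] [IsDiscreteValuationRing O]
    [Finite (IsLocalRing.ResidueField O)]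
    (π : O ⧸ (IsLocalRing.maximalIdeal O ^ 2))
    (hπ : Ideal.span {π} =
      Ideal.map (Ideal.Quotient.mk (IsLocalRing.maximalIdeal O ^ 2))
        (IsLocalRing.maximalIdeal O))
    (ψ : AddChar (IsLocalRing.ResidueField O) ℂˣ) (hψ : ∃ x, ψ x ≠ 1)
    (s : IsLocalRing.ResidueField O → O ⧸ (IsLocalRing.maximalIdeal O ^ 2))
    (hs : ∀ x, redRes O (s x) = x) (hs0 : s 0 = 0) (hs1 : s 1 = 1)
    (l : ℕ) (a : Fin l → IsLocalRing.ResidueField O) (ha : Function.Injective a)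
    (c : Fin l → ℕ) (lam : (i : Fin l) → Fin (c i) → ℕ) (hlam : ∀ i j, 1 ≤ lam i j)
    (A : Matrix (JIdx l c lam) (JIdx l c lam) (IsLocalRing.ResidueField O))
    (hA : A = Matrix.blockDiagonal' (fun i =>
      a i • (1 : Matrix ((j : Fin (c i)) × Fin (lam i j)) ((j : Fin (c i)) × Fin (lam i j))
          (IsLocalRing.ResidueField O)) +
        Matrix.blockDiagonal' (fun j => principalNilpotent (IsLocalRing.ResidueField O)
          (lam i j))))
    (θ : ↥(redGL O (JIdx l c lam)).ker →* ℂˣ)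
    (hθ : ∀ (x : ↥(redGL O (JIdx l c lam)).ker)
        (Y : Matrix (JIdx l c lam) (JIdx l c lam) (O ⧸ (IsLocalRing.maximalIdeal O ^ 2))),
      ((x : GL (JIdx l c lam) (O ⧸ (IsLocalRing.maximalIdeal O ^ 2))) :
          Matrix (JIdx l c lam) (JIdx l c lam) (O ⧸ (IsLocalRing.maximalIdeal O ^ 2))) =
        1 + π • Y →
      θ x = ψ (Matrix.trace (A * Y.map (redRes O)))) :
    (charStabilizer (redGL O (JIdx l c lam)).ker θ :
        Set (GL (JIdx l c lam) (O ⧸ (IsLocalRing.maximalIdeal O ^ 2)))) =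
      {w : GL (JIdx l c lam) (O ⧸ (IsLocalRing.maximalIdeal O ^ 2)) |
        ∃ x ∈ (redGL O (JIdx l c lam)).ker,
          ∃ y : GL (JIdx l c lam) (O ⧸ (IsLocalRing.maximalIdeal O ^ 2)),
            ((↑y : Matrix (JIdx l c lam) (JIdx l c lam)
                (O ⧸ (IsLocalRing.maximalIdeal O ^ 2))) * A.map s =
              A.map s * (↑y : Matrix (JIdx l c lam) (JIdx l c lam)
                (O ⧸ (IsLocalRing.maximalIdeal O ^ 2)))) ∧
            w = x * y} :=
  charStabilizer_eq_ker_mul_centralizer_section_general O π hπ ψ hψ s hs hs0 hs1 l a c lam A hA θ hθ
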